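/- Let n ≥ 1, let φ be a positive definite n×n complex matrix, let k be an arbitrary n×n complex matrix, and let 1 < p < ∞. Then the supremum, over all n×n density matrices σ, of Tr[σ^{1−1/p} · k φ^{1/p−1} kᴴ] equals (Tr[(φ^{(1−p)/(2p)} kᴴ k φ^{(1−p)/(2p)})^p])^{1/p}. (This is the finite-dimensional content of Proposition 2.1 of the paper: the square of the Araki–Masuda L_{2p}-norm of k with weight φ equals the Kosaki L_p-norm of kᴴk with weight φ.) -/

import Mathlib

/-! With `B = k φ^{(1-p)/(2p)}` the two sides become `sup_σ Tr[σ^{1-1/p} BBᴴ]` and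
`(Tr[(BᴴB)^p])^{1/p}`; since `BᴴB` and `BBᴴ` have the same characteristic polynomial, the latter
is the Schatten `p`-norm of `M = BBᴴ`. In eigenbases `σ = ∑ sᵢ uᵢuᵢᴴ`, `M = ∑ μⱼ vⱼvⱼᴴ` one has
`Tr[σ^{1-1/p} M] = ∑ᵢⱼ sᵢ^{1-1/p} μⱼ |⟨uᵢ, vⱼ⟩|²`, and the weights `|⟨uᵢ, vⱼ⟩|²` form a doubly
stochastic matrix, so Hölder's inequality bounds this by `(∑ μⱼ^p)^{1/p}`; equality holds at
`σ = M^p / Tr M^p`. -/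

open Matrix
open scoped ComplexOrder

/-- Real power of a matrix, defined via the spectral decomposition when the matrix is
Hermitian (applying the real power function to the eigenvalues), and `0` otherwise. -/
noncomputable def mpow {n : ℕ} (A : Matrix (Fin n) (Fin n) ℂ) (r : ℝ) :
    Matrix (Fin n) (Fin n) ℂ :=
  if hA : A.IsHermitian then
    (hA.eigenvectorUnitary : Matrix (Fin n) (Fin n) ℂ) *
      Matrix.diagonal (fun i => ((hA.eigenvalues i ^ r : ℝ) : ℂ)) *
      (star hA.eigenvectorUnitary : Matrix (Fin n) (Fin n) ℂ)
  else 0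

open Finset

theorem Real.sum_sum_rpow_mul_le_of_mem_doublyStochastic {ι : Type*} [Fintype ι]
    [DecidableEq ι] {p : ℝ} (hp : 1 < p) {s μ : ι → ℝ} (hs : ∀ i, 0 ≤ s i) (hμ : ∀ j, 0 ≤ μ j)
    {w : Matrix ι ι ℝ} (hw : w ∈ doublyStochastic ℝ ι) :
    ∑ i, ∑ j, s i ^ (1 - 1 / p) * μ j * w i j ≤
      (∑ i, s i) ^ (1 - 1 / p) * (∑ j, μ j ^ p) ^ (1 / p) := by
  obtain ⟨hw0, hrow, hcol⟩ := mem_doublyStochastic_iff_sum.mp hw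
  set q := p.conjExponent
  have hpq : p.HolderConjugate q := .conjExponent hp
  have hq : 1 - 1 / p = 1 / q := by rw [one_div, one_div, hpq.one_sub_inv]
  have hinv : 1 / q + 1 / p = 1 := by rw [← hq]; ring
  have holder := inner_le_Lp_mul_Lq_of_nonneg (s := (univ : Finset (ι × ι))) hpq.symm
    (f := fun x => (s x.1 * w x.1 x.2) ^ (1 / q)) (g := fun x => (μ x.2 ^ p * w x.1 x.2) ^ (1 / p))
    (fun x _ => Real.rpow_nonneg (mul_nonneg (hs _) (hw0 _ _)) _)
    (fun x _ => Real.rpow_nonneg (mul_nonneg (Real.rpow_nonneg (hμ _) _) (hw0 _ _)) _)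
  have hfg (i j : ι) : (s i * w i j) ^ (1 / q) * (μ j ^ p * w i j) ^ (1 / p) =
      s i ^ (1 / q) * μ j * w i j := by
    rw [Real.mul_rpow (hs i) (hw0 i j), Real.mul_rpow (Real.rpow_nonneg (hμ j) _) (hw0 i j),
      ← Real.rpow_mul (hμ j), mul_one_div_cancel hpq.ne_zero, Real.rpow_one]
    calc s i ^ (1 / q) * w i j ^ (1 / q) * (μ j * w i j ^ (1 / p))
        = s i ^ (1 / q) * μ j * (w i j ^ (1 / q) * w i j ^ (1 / p)) := by ring
      _ = s i ^ (1 / q) * μ j * w i j := by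
        rw [← Real.rpow_add' (hw0 i j) (by rw [hinv]; exact one_ne_zero), hinv, Real.rpow_one]
  have hf : ∑ x : ι × ι, ((s x.1 * w x.1 x.2) ^ (1 / q)) ^ q = ∑ i, s i := by
    simp only [one_div, Real.rpow_inv_rpow (mul_nonneg (hs _) (hw0 _ _)) hpq.symm.ne_zero,
      Fintype.sum_prod_type, ← mul_sum, hrow, mul_one]
  have hg : ∑ x : ι × ι, ((μ x.2 ^ p * w x.1 x.2) ^ (1 / p)) ^ p = ∑ j, μ j ^ p := by
    simp only [one_div, Real.rpow_inv_rpow (mul_nonneg (Real.rpow_nonneg (hμ _) _) (hw0 _ _))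
      hpq.ne_zero, Fintype.sum_prod_type_right, ← mul_sum, hcol, mul_one]
  rw [hq]
  simpa only [hf, hg, Fintype.sum_prod_type, hfg] using holder

theorem Real.sum_rpow_div_sum_rpow_rpow_mul {ι : Type*} [Fintype ι] {p : ℝ} (hp : 1 < p)
    {μ : ι → ℝ} (hμ : ∀ j, 0 ≤ μ j) (hT : ∑ j, μ j ^ p ≠ 0) :
    ∑ j, (μ j ^ p / ∑ k, μ k ^ p) ^ (1 - 1 / p) * μ j = (∑ j, μ j ^ p) ^ (1 / p) := by
  set T := ∑ j, μ j ^ p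
  have hT0 : 0 < T := hT.symm.lt_of_le (sum_nonneg fun j _ => Real.rpow_nonneg (hμ j) p)
  have hp0 : p ≠ 0 := by positivity
  have hexp : p * (1 - 1 / p) + 1 = p := by field_simp; ring
  have hterm (j : ι) : (μ j ^ p / T) ^ (1 - 1 / p) * μ j = μ j ^ p / T ^ (1 - 1 / p) := by
    rw [Real.div_rpow (Real.rpow_nonneg (hμ j) p) hT0.le, ← Real.rpow_mul (hμ j),
      div_mul_eq_mul_div, ← Real.rpow_add_one' (hμ j) (by rw [hexp]; exact hp0), hexp]
  rw [sum_congr rfl fun j _ => hterm j, ← sum_div, div_eq_iff (by positivity),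
    ← Real.rpow_add hT0, add_sub_cancel, Real.rpow_one]

namespace Matrix

variable {m 𝕜 : Type*} [Fintype m] [DecidableEq m] [RCLike 𝕜]

theorem of_norm_sq_mem_doublyStochastic {W : Matrix m m 𝕜} (hW : W ∈ unitaryGroup m 𝕜) :
    of (fun i j => ‖W i j‖ ^ 2) ∈ doublyStochastic ℝ m := by
  have sum_norm_sq {U : Matrix m m 𝕜} (hU : U * star U = 1) (i : m) :
      ∑ j, ‖U i j‖ ^ 2 = 1 := by
    have h := congr_fun₂ hU i i
    rw [mul_apply, one_apply_eq] at h
    simp only [star_apply, RCLike.star_def, RCLike.mul_conj] at h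
    exact_mod_cast h
  refine mem_doublyStochastic_iff_sum.mpr ⟨fun i j => sq_nonneg _, sum_norm_sq
    (mem_unitaryGroup_iff.mp hW), fun j => ?_⟩
  simpa [norm_star] using sum_norm_sq (mem_unitaryGroup_iff.mp (Unitary.star_mem hW)) j

theorem trace_diagonal_mul_mul_diagonal_mul_star (a b : m → ℝ) (W : Matrix m m 𝕜) :
    (diagonal (RCLike.ofReal ∘ a) * W * diagonal (RCLike.ofReal ∘ b) * star W).trace =
      ∑ i, ∑ j, ((a i * b j * ‖W i j‖ ^ 2 : ℝ) : 𝕜) := by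
  refine Finset.sum_congr rfl fun i _ => ?_
  rw [diag_apply, mul_apply]
  refine Finset.sum_congr rfl fun j _ => ?_
  rw [mul_diagonal, diagonal_mul, star_apply, Function.comp_apply, Function.comp_apply,
    mul_assoc, mul_assoc, RCLike.star_def, mul_comm _ (starRingEnd 𝕜 _), ← mul_assoc (W i j),
    RCLike.mul_conj]
  push_cast
  ring

theorem IsHermitian.trace_cfc_mul_cfc {A B : Matrix m m 𝕜} (hA : A.IsHermitian)
    (hB : B.IsHermitian) (f g : ℝ → ℝ) :
    (cfc f A * cfc g B).trace =
      ∑ i, ∑ j, ((f (hA.eigenvalues i) * g (hB.eigenvalues j) *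
        ‖(star (hA.eigenvectorUnitary : Matrix m m 𝕜) * hB.eigenvectorUnitary) i j‖ ^ 2 : ℝ) :
          𝕜) := by
  rw [hA.cfc_eq, hB.cfc_eq, IsHermitian.cfc, IsHermitian.cfc, Unitary.conjStarAlgAut_apply,
    Unitary.conjStarAlgAut_apply, ← trace_diagonal_mul_mul_diagonal_mul_star, star_mul, star_star]
  conv_lhs => simp only [mul_assoc]; rw [trace_mul_comm]
  simp only [mul_assoc, Function.comp_def]

theorem IsHermitian.trace_cfc {A : Matrix m m 𝕜} (hA : A.IsHermitian) (f : ℝ → ℝ) :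
    (cfc f A).trace = ∑ i, (f (hA.eigenvalues i) : 𝕜) := by
  rw [hA.cfc_eq, IsHermitian.cfc, Unitary.conjStarAlgAut_apply, trace_mul_cycle,
    Unitary.coe_star_mul_self, one_mul, trace_diagonal]
  rfl

theorem IsHermitian.trace_cfc_eq_sum_roots_charpoly {A : Matrix m m 𝕜} (hA : A.IsHermitian)
    (f : ℝ → ℝ) :
    (cfc f A).trace = (A.charpoly.roots.map fun z => (f (RCLike.re z) : 𝕜)).sum := by
  rw [hA.trace_cfc, hA.roots_charpoly_eq_eigenvalues, Multiset.map_map,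
    Finset.sum_eq_multiset_sum]
  simp only [Function.comp_def, RCLike.ofReal_re]

theorem trace_cfc_conjTranspose_mul_self (B : Matrix m m 𝕜) (f : ℝ → ℝ) :
    (cfc f (Bᴴ * B)).trace = (cfc f (B * Bᴴ)).trace := by
  rw [(isHermitian_conjTranspose_mul_self B).trace_cfc_eq_sum_roots_charpoly,
    (isHermitian_mul_conjTranspose_self B).trace_cfc_eq_sum_roots_charpoly, charpoly_mul_comm]

theorem PosSemidef.re_trace_cfc_rpow_mul_mem_Icc {σ M : Matrix m m 𝕜} (hσ : σ.PosSemidef)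
    (hσ1 : σ.trace = 1) (hM : M.PosSemidef) {p : ℝ} (hp : 1 < p) :
    RCLike.re (cfc (· ^ (1 - 1 / p) : ℝ → ℝ) σ * M).trace ∈
      Set.Icc 0 (RCLike.re (cfc (· ^ p : ℝ → ℝ) M).trace ^ (1 / p)) := by
  set W : Matrix m m 𝕜 :=
    star (hσ.1.eigenvectorUnitary : Matrix m m 𝕜) * hM.1.eigenvectorUnitary
  have hW : W ∈ unitaryGroup m 𝕜 := mul_mem (Unitary.star_mem (Subtype.prop _)) (Subtype.prop _)
  have hsum : ∑ i, hσ.1.eigenvalues i = 1 := by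
    have := hσ.1.trace_eq_sum_eigenvalues
    rw [hσ1] at this
    exact_mod_cast this.symm
  have htrace : (cfc (· ^ (1 - 1 / p) : ℝ → ℝ) σ * M).trace = ∑ i, ∑ j,
      ((hσ.1.eigenvalues i ^ (1 - 1 / p) * hM.1.eigenvalues j * ‖W i j‖ ^ 2 : ℝ) : 𝕜) := by
    conv_lhs => rw [← cfc_id' ℝ M hM.1.isSelfAdjoint]
    exact hσ.1.trace_cfc_mul_cfc hM.1 _ _
  rw [htrace, hM.1.trace_cfc]
  simp only [← RCLike.ofReal_sum, RCLike.ofReal_re]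
  refine ⟨sum_nonneg fun i _ => sum_nonneg fun j _ => ?_, ?_⟩
  · exact mul_nonneg (mul_nonneg (Real.rpow_nonneg (hσ.eigenvalues_nonneg i) _)
      (hM.eigenvalues_nonneg j)) (sq_nonneg _)
  · simpa [hsum] using Real.sum_sum_rpow_mul_le_of_mem_doublyStochastic hp hσ.eigenvalues_nonneg
      hM.eigenvalues_nonneg (of_norm_sq_mem_doublyStochastic hW)

open scoped MatrixOrder in
theorem PosSemidef.exists_re_trace_cfc_rpow_mul_eq {M : Matrix m m 𝕜} (hM : M.PosSemidef)
    {p : ℝ} (hp : 1 < p) (hT : RCLike.re (cfc (· ^ p : ℝ → ℝ) M).trace ≠ 0) :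
    ∃ σ : Matrix m m 𝕜, σ.PosSemidef ∧ σ.trace = 1 ∧
      RCLike.re (cfc (· ^ p : ℝ → ℝ) M).trace ^ (1 / p) =
        RCLike.re (cfc (· ^ (1 - 1 / p) : ℝ → ℝ) σ * M).trace := by
  have hspec : ∀ x ∈ spectrum ℝ M, 0 ≤ x := fun x hx => spectrum_nonneg_of_nonneg hM.nonneg hx
  rw [hM.1.trace_cfc, ← RCLike.ofReal_sum, RCLike.ofReal_re] at hT ⊢
  set T := ∑ j, hM.1.eigenvalues j ^ p
  have hT0 : 0 ≤ T := sum_nonneg fun j _ => Real.rpow_nonneg (hM.eigenvalues_nonneg j) p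
  refine ⟨cfc (fun x => x ^ p / T) M, ?_, ?_, ?_⟩
  · exact (cfc_nonneg fun x hx => by have := hspec x hx; positivity).posSemidef
  · rw [hM.1.trace_cfc, ← RCLike.ofReal_sum, ← sum_div, div_self hT, RCLike.ofReal_one]
  · have hσM : cfc (· ^ (1 - 1 / p) : ℝ → ℝ) (cfc (fun x => x ^ p / T) M) * M =
        cfc (fun x => (x ^ p / T) ^ (1 - 1 / p) * x) M := by
      rw [cfc_mul (fun x => (x ^ p / T) ^ (1 - 1 / p)) (fun x => x) M
        (M.finite_real_spectrum.continuousOn _) (M.finite_real_spectrum.continuousOn _),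
        cfc_id' ℝ M, cfc_comp' (fun x : ℝ => x ^ (1 - 1 / p)) (fun x => x ^ p / T) M
        ((M.finite_real_spectrum.image _).continuousOn _) (M.finite_real_spectrum.continuousOn _)]
    rw [hσM, hM.1.trace_cfc, ← RCLike.ofReal_sum, RCLike.ofReal_re,
      Real.sum_rpow_div_sum_rpow_rpow_mul hp hM.eigenvalues_nonneg hT]

theorem PosSemidef.sSup_re_trace_cfc_rpow_mul {M : Matrix m m 𝕜} (hM : M.PosSemidef)
    {p : ℝ} (hp : 1 < p) :
    sSup {x : ℝ | ∃ σ : Matrix m m 𝕜, σ.PosSemidef ∧ σ.trace = 1 ∧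
        x = RCLike.re (cfc (· ^ (1 - 1 / p) : ℝ → ℝ) σ * M).trace} =
      RCLike.re (cfc (· ^ p : ℝ → ℝ) M).trace ^ (1 / p) := by
  set T := RCLike.re (cfc (· ^ p : ℝ → ℝ) M).trace
  set S := {x : ℝ | ∃ σ : Matrix m m 𝕜, σ.PosSemidef ∧ σ.trace = 1 ∧
    x = RCLike.re (cfc (· ^ (1 - 1 / p) : ℝ → ℝ) σ * M).trace}
  have hbounds : ∀ x ∈ S, x ∈ Set.Icc 0 (T ^ (1 / p)) := by
    rintro x ⟨σ, hσ, hσ1, rfl⟩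
    exact hσ.re_trace_cfc_rpow_mul_mem_Icc hσ1 hM hp
  by_cases hT : T = 0
  -- `m` may be empty: then no density matrix exists and `sSup ∅ = 0`
  · rw [hT, Real.zero_rpow (by positivity)] at hbounds ⊢
    exact le_antisymm (Real.sSup_nonpos fun x hx => (hbounds x hx).2)
      (Real.sSup_nonneg fun x hx => (hbounds x hx).1)
  · obtain ⟨σ, hσ, hσ1, hσT⟩ := hM.exists_re_trace_cfc_rpow_mul_eq hp hT
    exact IsGreatest.csSup_eq ⟨⟨σ, hσ, hσ1, hσT⟩, fun x hx => (hbounds x hx).2⟩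

end Matrix

section mpow

variable {n : ℕ}

theorem mpow_eq_cfc {A : Matrix (Fin n) (Fin n) ℂ} (hA : A.IsHermitian) (r : ℝ) :
    mpow A r = cfc (· ^ r : ℝ → ℝ) A := by
  rw [mpow, dif_pos hA, hA.cfc_eq, IsHermitian.cfc, Unitary.conjStarAlgAut_apply]
  rfl

theorem conjTranspose_mpow {A : Matrix (Fin n) (Fin n) ℂ} (hA : A.IsHermitian) (r : ℝ) :
    (mpow A r)ᴴ = mpow A r := by
  rw [mpow_eq_cfc hA, ← star_eq_conjTranspose]
  exact (cfc_predicate _ A : IsSelfAdjoint _).star_eq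

theorem Matrix.PosDef.mpow_mul_mpow {A : Matrix (Fin n) (Fin n) ℂ} (hA : A.PosDef) (r s : ℝ) :
    mpow A r * mpow A s = mpow A (r + s) := by
  simp only [mpow_eq_cfc hA.1]
  rw [← cfc_mul _ _ A (A.finite_real_spectrum.continuousOn _)
    (A.finite_real_spectrum.continuousOn _)]
  refine cfc_congr fun x hx => (Real.rpow_add ?_ r s).symm
  obtain ⟨i, rfl⟩ := hA.1.spectrum_real_eq_range_eigenvalues ▸ hx
  exact hA.eigenvalues_pos i

theorem trace_mpow_conjTranspose_mul_self (B : Matrix (Fin n) (Fin n) ℂ) (r : ℝ) :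
    (mpow (Bᴴ * B) r).trace = (mpow (B * Bᴴ) r).trace := by
  rw [mpow_eq_cfc (isHermitian_conjTranspose_mul_self B),
    mpow_eq_cfc (isHermitian_mul_conjTranspose_self B), trace_cfc_conjTranspose_mul_self]

theorem Matrix.PosSemidef.sSup_re_trace_mpow_mul {M : Matrix (Fin n) (Fin n) ℂ}
    (hM : M.PosSemidef) {p : ℝ} (hp : 1 < p) :
    sSup {x : ℝ | ∃ σ : Matrix (Fin n) (Fin n) ℂ, σ.PosSemidef ∧ σ.trace = 1 ∧
        x = (mpow σ (1 - 1 / p) * M).trace.re} = (mpow M p).trace.re ^ (1 / p) := by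
  rw [mpow_eq_cfc hM.1]
  convert hM.sSup_re_trace_cfc_rpow_mul hp using 6 with x σ
  · exact and_congr_right fun hσ => by rw [mpow_eq_cfc hσ.1]; rfl
  · rfl

end mpow

theorem araki_masuda_sq_eq_kosaki_general {n : ℕ}
    (φ k : Matrix (Fin n) (Fin n) ℂ) (hφ : φ.PosDef)
    (p : ℝ) (hp : 1 < p) :
    sSup {x : ℝ | ∃ σ : Matrix (Fin n) (Fin n) ℂ, σ.PosSemidef ∧ σ.trace = 1 ∧
        x = (Matrix.trace (mpow σ (1 - 1 / p) * (k * mpow φ (1 / p - 1) * kᴴ))).re} =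
      ((Matrix.trace (mpow (mpow φ ((1 - p) / (2 * p)) * (kᴴ * k) *
          mpow φ ((1 - p) / (2 * p))) p)).re) ^ (1 / p) := by
  set c := (1 - p) / (2 * p)
  set B := k * mpow φ c
  have hc : (mpow φ c)ᴴ = mpow φ c := conjTranspose_mpow hφ.1 c
  have hBB : mpow φ c * (kᴴ * k) * mpow φ c = Bᴴ * B := by
    simp only [B, conjTranspose_mul, hc, mul_assoc]
  have hBB' : k * mpow φ (1 / p - 1) * kᴴ = B * Bᴴ := by
    rw [show 1 / p - 1 = c + c by simp only [c]; field_simp; ring, ← hφ.mpow_mul_mpow]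
    simp only [B, conjTranspose_mul, hc, mul_assoc]
  rw [hBB, hBB', trace_mpow_conjTranspose_mul_self]
  exact (posSemidef_self_mul_conjTranspose B).sSup_re_trace_mpow_mul hp

theorem araki_masuda_sq_eq_kosaki {n : ℕ} (hn : 1 ≤ n)
    (φ k : Matrix (Fin n) (Fin n) ℂ) (hφ : φ.PosDef)
    (p : ℝ) (hp : 1 < p) :
    sSup {x : ℝ | ∃ σ : Matrix (Fin n) (Fin n) ℂ, σ.PosSemidef ∧ σ.trace = 1 ∧
        x = (Matrix.trace (mpow σ (1 - 1 / p) * (k * mpow φ (1 / p - 1) * kᴴ))).re} =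
      ((Matrix.trace (mpow (mpow φ ((1 - p) / (2 * p)) * (kᴴ * k) *
          mpow φ ((1 - p) / (2 * p))) p)).re) ^ (1 / p) :=
  araki_masuda_sq_eq_kosaki_general φ k hφ p hp
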